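/- Let W_λ be a unilateral weighted shift in ℓ²(ℕ) that is C-symmetric with respect to a conjugation C satisfying C eₙ ∈ dom(W_λ) for all n. Then the set Λ₀ = {i ∈ ℕ : λᵢ = 0} is infinite. -/

import Mathlib

open InnerProductSpace in
/-- A conjugation on a complex inner product space: an antilinear involution
satisfying `⟪Cf, Cg⟫ = ⟪g, f⟫`. -/
structure Conjugation (H : Type*) [NormedAddCommGroup H] [InnerProductSpace ℂ H] where
  toFun : H → H
  map_add' : ∀ x y, toFun (x + y) = toFun x + toFun y
  map_smul' : ∀ (c : ℂ) (x : H), toFun (c • x) = (starRingEnd ℂ c) • toFun x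
  invol : ∀ x, toFun (toFun x) = x
  inner_map : ∀ x y, (inner ℂ (toFun x) (toFun y) : ℂ) = inner ℂ y x

/-- `T` is `C`-symmetric: `T ⊆ C T* C`. -/
noncomputable def CSymmetric {H : Type*} [NormedAddCommGroup H] [InnerProductSpace ℂ H]
    [CompleteSpace H] (C : Conjugation H) (T : H →ₗ.[ℂ] H) : Prop :=
  ∀ x : T.domain, ∃ hx : C.toFun x ∈ T.adjoint.domain,
    C.toFun (T.adjoint ⟨C.toFun x, hx⟩) = T x

/-- `T` is `C`-selfadjoint: `T = C T* C`. -/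
noncomputable def CSelfAdjoint {H : Type*} [NormedAddCommGroup H] [InnerProductSpace ℂ H]
    [CompleteSpace H] (C : Conjugation H) (T : H →ₗ.[ℂ] H) : Prop :=
  CSymmetric C T ∧ ∀ y : H, C.toFun y ∈ T.adjoint.domain → y ∈ T.domain

/-- Composition of partially defined linear maps, with its natural (maximal) domain. -/
noncomputable def LinearPMap.pcomp {R E F G : Type*} [Ring R] [AddCommGroup E] [Module R E]
    [AddCommGroup F] [Module R F] [AddCommGroup G] [Module R G]
    (g : F →ₗ.[R] G) (f : E →ₗ.[R] F) : E →ₗ.[R] G :=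
  g.comp (f.domRestrict ((g.domain.comap f.toFun).map f.domain.subtype))
    (by
      intro z
      obtain ⟨y, hy, hyx⟩ := z.2.1
      erw [LinearPMap.domRestrict_apply (y := y) (by exact hyx.symm)]
      exact hy)

/-- Natural powers of a partially defined linear map, `T^(n+1) = T ∘ T^n`, with
`T^0` the identity on the whole space. -/
noncomputable def LinearPMap.ppow {R E : Type*} [Ring R] [AddCommGroup E] [Module R E]
    (T : E →ₗ.[R] E) : ℕ → E →ₗ.[R] E
  | 0 => ⟨⊤, (⊤ : Submodule R E).subtype⟩
  | n + 1 => T.pcomp (T.ppow n)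

/-- `W` is the unilateral weighted shift in `ℓ²(ℕ)` with weights `lam` (0-indexed:
`W eₙ = lam n • e_{n+1}`): it has the maximal domain
`{f : Σ |lam n * f n|² < ∞}` and acts by `(W f)(n+1) = lam n * f n`, `(W f)(0) = 0`. -/
def IsWeightedShift (lam : ℕ → ℂ) (W : lp (fun _ : ℕ => ℂ) 2 →ₗ.[ℂ] lp (fun _ : ℕ => ℂ) 2) :
    Prop :=
  (∀ f : lp (fun _ : ℕ => ℂ) 2, f ∈ W.domain ↔ Memℓp (fun n => lam n * f n) 2) ∧
  (∀ f : W.domain, (W f : lp (fun _ : ℕ => ℂ) 2) 0 = 0 ∧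
    ∀ n : ℕ, (W f : lp (fun _ : ℕ => ℂ) 2) (n + 1) = lam n * (f : lp (fun _ : ℕ => ℂ) 2) n)

/-- The canonical orthonormal basis of `ℓ²(ℕ)` (0-indexed). -/
noncomputable def e (n : ℕ) : lp (fun _ : ℕ => ℂ) 2 := lp.single 2 n 1

/-!
Write `c m n = (C eₘ)(n)`; this matrix is symmetric. For a `C`-symmetric operator the
bilinear form `[u, v] = ⟪C u, v⟫` satisfies `[u, W v] = [v, W u]`; testing it on `C e_{m+1}` and
`C eₙ` gives `W (C e_{m+1}) = lam m • C eₘ`. Reading this coordinatewise,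
`lam m * c m 0 = 0` and `lam m * c m (j+1) = lam j * c (m+1) j`. If only finitely many weights
vanish, then `lam m ≠ 0` for all `m ≥ N`, and induction on `j` forces `c m j = 0` for `m ≥ N`,
i.e. `C eₘ = 0`, which is absurd since `C` is injective.
-/

local notation "ℓ²" => lp (fun _ : ℕ => ℂ) 2

namespace Conjugation

variable {H : Type*} [NormedAddCommGroup H] [InnerProductSpace ℂ H] (C : Conjugation H)

theorem map_zero : C.toFun 0 = 0 := by
  simpa using C.map_add' 0 0

theorem map_ne_zero {x : H} (hx : x ≠ 0) : C.toFun x ≠ 0 := by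
  intro h
  apply hx
  rw [← C.invol x, h, C.map_zero]

theorem inner_map_comm (x y : H) : (inner ℂ (C.toFun x) y : ℂ) = inner ℂ (C.toFun y) x := by
  conv_lhs => rw [← C.invol y]
  exact C.inner_map x (C.toFun y)

end Conjugation

theorem CSymmetric.inner_map_apply_comm {H : Type*} [NormedAddCommGroup H]
    [InnerProductSpace ℂ H] [CompleteSpace H] {C : Conjugation H} {T : H →ₗ.[ℂ] H}
    (hT : CSymmetric C T) (hdense : Dense (T.domain : Set H)) (u v : T.domain) :
    (inner ℂ (C.toFun u) (T v) : ℂ) = inner ℂ (C.toFun v) (T u) := by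
  obtain ⟨hu, hTu⟩ := hT u
  rw [← hTu, C.inner_map]
  exact (LinearPMap.adjoint_isFormalAdjoint hdense ⟨C.toFun u, hu⟩ v).symm

theorem inner_e_left (n : ℕ) (v : ℓ²) : (inner ℂ (e n) v : ℂ) = v n := by
  simp [e, lp.inner_single_left, RCLike.inner_apply]

theorem e_ne_zero (n : ℕ) : e n ≠ 0 := by
  intro h
  have := congrArg (fun v : ℓ² => v n) h
  simp [e] at this

theorem Conjugation.apply_e_comm (C : Conjugation ℓ²) (m n : ℕ) :
    C.toFun (e n) m = C.toFun (e m) n := by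
  rw [← inner_e_left, ← inner_e_left, ← inner_conj_symm, C.inner_map_comm, inner_conj_symm]

namespace IsWeightedShift

variable {lam : ℕ → ℂ} {W : ℓ² →ₗ.[ℂ] ℓ²}

theorem single_mem_domain (hW : IsWeightedShift lam W) (i : ℕ) (c : ℂ) :
    lp.single 2 i c ∈ W.domain := by
  rw [hW.1]
  have hfun : (fun k => lam k * (lp.single 2 i c : ℓ²) k) = (lam i * c) • ⇑(e i) := by
    funext k
    by_cases hk : k = i
    · subst hk
      simp [e]
    · simp [e, hk]
  rw [hfun]
  exact (lp.memℓp (e i)).const_smul (lam i * c)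

theorem dense_domain (hW : IsWeightedShift lam W) : Dense (W.domain : Set ℓ²) := fun f =>
  mem_closure_of_tendsto (lp.hasSum_single (by norm_num) f)
    (Filter.Eventually.of_forall fun _ =>
      Submodule.sum_mem _ fun i _ => hW.single_mem_domain i (f i))

theorem apply_conj_e_succ (hW : IsWeightedShift lam W) {C : Conjugation ℓ²}
    (hsym : CSymmetric C W) (hdom : ∀ n, C.toFun (e n) ∈ W.domain) (m n : ℕ) :
    (W ⟨C.toFun (e (m + 1)), hdom (m + 1)⟩ : ℓ²) n = lam m * C.toFun (e m) n := by
  have h := hsym.inner_map_apply_comm hW.dense_domain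
    ⟨C.toFun (e n), hdom n⟩ ⟨C.toFun (e (m + 1)), hdom (m + 1)⟩
  simp only [C.invol, inner_e_left] at h
  rw [h, (hW.2 _).2 m, C.apply_e_comm]

end IsWeightedShift

theorem eq_zero_of_shift_recursion {lam : ℕ → ℂ} {c : ℕ → ℕ → ℂ} {N : ℕ}
    (hlam : ∀ m, N ≤ m → lam m ≠ 0) (h0 : ∀ m, lam m * c m 0 = 0)
    (hsucc : ∀ m j, lam m * c m (j + 1) = lam j * c (m + 1) j) :
    ∀ j m, N ≤ m → c m j = 0 := by
  intro j
  induction j with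
  | zero => exact fun m hm => (mul_eq_zero.mp (h0 m)).resolve_left (hlam m hm)
  | succ j ih =>
    intro m hm
    have h := hsucc m j
    rw [ih (m + 1) (by omega), mul_zero] at h
    exact (mul_eq_zero.mp h).resolve_left (hlam m hm)

/-- if a unilateral weighted shift `W_λ` is `C`-symmetric with
`C eₙ ∈ dom W_λ` for all `n`, then `Λ₀ = {i : λᵢ = 0}` is infinite. -/
theorem stmt_15 (lam : ℕ → ℂ)
    (W : lp (fun _ : ℕ => ℂ) 2 →ₗ.[ℂ] lp (fun _ : ℕ => ℂ) 2)
    (hW : IsWeightedShift lam W)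
    (C : Conjugation (lp (fun _ : ℕ => ℂ) 2)) (hsym : CSymmetric C W)
    (hdom : ∀ n : ℕ, C.toFun (e n) ∈ W.domain) :
    {i : ℕ | lam i = 0}.Infinite := by
  intro hfin
  obtain ⟨B, hB⟩ := hfin.bddAbove
  have hlam : ∀ m, B + 1 ≤ m → lam m ≠ 0 := fun m hm h0 => by
    have := hB h0
    omega
  have hrow := eq_zero_of_shift_recursion (c := fun m j => C.toFun (e m) j) hlam
    (fun m => by rw [← hW.apply_conj_e_succ hsym hdom]; exact (hW.2 _).1)
    (fun m j => by rw [← hW.apply_conj_e_succ hsym hdom]; exact (hW.2 _).2 j)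
  exact C.map_ne_zero (e_ne_zero (B + 1)) (lp.ext (funext fun j => hrow j (B + 1) le_rfl))
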